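/- Let Γ be a cocompact Kleinian group. Then there exists a constant d₀ > 1 such that N(T₀) > d₀ for every loxodromic element T₀ ∈ Γ. -/

import Mathlib

open Matrix Complex Pointwise

/-- `SL(2,ℂ)`. -/
abbrev SL2C := Matrix.SpecialLinearGroup (Fin 2) ℂ

/-- The topology on `SL(2,ℂ)` induced from the matrix entries. -/
noncomputable instance : TopologicalSpace SL2C :=
  TopologicalSpace.induced (fun A => (A : Matrix (Fin 2) (Fin 2) ℂ)) inferInstance

/-- `PSL(2,ℂ)`, the quotient of `SL(2,ℂ)` by its center `{±I}`,
equipped with the quotient topology. -/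
abbrev PSL2C := SL2C ⧸ Subgroup.center SL2C

/-- The diagonal matrix `diag(a, a⁻¹)` as an element of `SL(2,ℂ)`. -/
noncomputable def dMat (a : ℂ) (h : a ≠ 0) : SL2C :=
  ⟨!![a, 0; 0, a⁻¹], by rw [Matrix.det_fin_two_of]; simp [mul_inv_cancel₀ h]⟩

/-- The projection `SL(2,ℂ) → PSL(2,ℂ)`. -/
def projMk : SL2C →* PSL2C := QuotientGroup.mk' _

/-- `T ∈ PSL(2,ℂ)` is loxodromic with diagonal parameter `a`: it is conjugate in
`PSL(2,ℂ)` to (the class of) `diag(a, a⁻¹)` with `|a| > 1`.  Its norm is `N(T) = |a|²`. -/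
def IsLoxodromicWith (T : PSL2C) (a : ℂ) : Prop :=
  ∃ h : a ≠ 0, 1 < ‖a‖ ∧ IsConj (projMk (dMat a h)) T

/-- `T ∈ PSL(2,ℂ)` is loxodromic. -/
def IsLoxodromic (T : PSL2C) : Prop := ∃ a : ℂ, IsLoxodromicWith T a

/-- `T ∈ PSL(2,ℂ)` is elliptic: a nonidentity element conjugate to (the class of)
`diag(e^{iφ/2}, e^{-iφ/2})` for some real `φ`. -/
def IsElliptic (T : PSL2C) : Prop :=
  T ≠ 1 ∧ ∃ φ : ℝ,
    IsConj (projMk (dMat (Complex.exp (φ * Complex.I / 2)) (Complex.exp_ne_zero _))) T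

/-- `T ∈ PSL(2,ℂ)` is parabolic: a nonidentity element whose trace squared equals `4`. -/
def IsParabolic (T : PSL2C) : Prop :=
  T ≠ 1 ∧ ∃ S : SL2C, projMk S = T ∧ (Matrix.trace (S : Matrix (Fin 2) (Fin 2) ℂ)) ^ 2 = 4

/-- The conjugate subgroup `α⁻¹ Γ α`. -/
def conjSG (Γ : Subgroup PSL2C) (α : PSL2C) : Subgroup PSL2C :=
  Γ.map (MulAut.conj α⁻¹).toMonoidHom

/-- `α` belongs to the commensurator of `Γ` in `PSL(2,ℂ)`: both indices
`[Γ : Γ ∩ α⁻¹Γα]` and `[α⁻¹Γα : Γ ∩ α⁻¹Γα]` are finite. -/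
def InCommensurator (Γ : Subgroup PSL2C) (α : PSL2C) : Prop :=
  (conjSG Γ α).relIndex Γ ≠ 0 ∧ Γ.relIndex (conjSG Γ α) ≠ 0

/-- The double coset `Γ g Γ = {γ₁ g γ₂ : γ₁, γ₂ ∈ Γ}`. -/
def doubleCoset (Γ : Subgroup PSL2C) (g : PSL2C) : Set PSL2C :=
  {x | ∃ γ₁ ∈ Γ, ∃ γ₂ ∈ Γ, x = γ₁ * g * γ₂}

/-- The centralizer `C_Γ(T) = {σ ∈ Γ : σT = Tσ}` of `T` in `Γ`, as a subgroup. -/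
def centIn (Γ : Subgroup PSL2C) (T : PSL2C) : Subgroup PSL2C :=
  Γ ⊓ Subgroup.centralizer {T}

/-- `R` is primitive in `Γ`: there is no `S ∈ Γ` and integer `m ≥ 2` with `Sᵐ = R`. -/
def IsPrimitive (Γ : Subgroup PSL2C) (R : PSL2C) : Prop :=
  ¬ ∃ S ∈ Γ, ∃ m : ℕ, 2 ≤ m ∧ S ^ m = R

/-!
Cocompactness gives a compact `K ⊆ PSL(2,ℂ)` meeting every coset `gΓ`, so every loxodromic
`T ∈ Γ` with `|a| ≤ 2` is `Γ`-conjugate to some `k⁻¹ diag(a, a⁻¹) k` with `k ∈ K`; these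
elements form a compact set `C`. Discreteness makes `Γ ∩ C` finite, and `|a|` is determined by
the conjugacy class (the trace `a + a⁻¹` is an invariant up to sign), so only finitely many
norms `N(T) ≤ 4` occur. All of them exceed `1`, and `d₀` is chosen below their minimum.
-/

open Set Topology

instance : IsTopologicalGroup SL2C := Matrix.SpecialLinearGroup.topologicalGroup

instance : LocallyCompactSpace (Matrix (Fin 2) (Fin 2) ℂ) :=
  inferInstanceAs (LocallyCompactSpace (Fin 2 → Fin 2 → ℂ))

instance : T2Space SL2C := Matrix.SpecialLinearGroup.isClosedEmbedding_val.isEmbedding.t2Space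

instance : LocallyCompactSpace SL2C :=
  Matrix.SpecialLinearGroup.isClosedEmbedding_val.locallyCompactSpace

instance : IsClosed (Subgroup.center SL2C : Set SL2C) := by
  rw [Subgroup.coe_center, ← Set.centralizer_univ]
  exact Set.isClosed_centralizer _

lemma continuous_projMk : Continuous projMk := continuous_quot_mk

lemma continuous_dMat : Continuous fun a : {a : ℂ // a ≠ 0} => dMat a a.2 := by
  refine continuous_induced_rng.2 (continuous_matrix fun i j => ?_)
  fin_cases i <;> fin_cases j
  exacts [continuous_subtype_val, continuous_const, continuous_const,
    continuous_subtype_val.inv₀ fun a => a.2]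

lemma IsOpenMap.exists_isCompact_image_eq_univ {X Y : Type*} [TopologicalSpace X]
    [TopologicalSpace Y] [LocallyCompactSpace X] [CompactSpace Y] {f : X → Y}
    (hf : IsOpenMap f) (hsurj : Function.Surjective f) :
    ∃ K : Set X, IsCompact K ∧ f '' K = univ := by
  choose K hKc hKn using fun x : X => exists_compact_mem_nhds x
  obtain ⟨t, ht⟩ := isCompact_univ.elim_finite_subcover (fun x => f '' interior (K x))
    (fun x => hf _ isOpen_interior) fun y _ => by
      obtain ⟨x, rfl⟩ := hsurj y
      exact mem_iUnion.2 ⟨x, mem_image_of_mem f (mem_interior_iff_mem_nhds.2 (hKn x))⟩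
  refine ⟨⋃ x ∈ t, K x, t.isCompact_biUnion fun x _ => hKc x, eq_univ_of_univ_subset ?_⟩
  rw [image_iUnion₂]
  exact ht.trans (iUnion₂_mono fun x _ => image_mono interior_subset)

lemma Subgroup.finite_inter_of_isCompact {G : Type*} [Group G] [TopologicalSpace G]
    [IsTopologicalGroup G] [T2Space G] (Γ : Subgroup G) [DiscreteTopology Γ] {C : Set G}
    (hC : IsCompact C) : (Γ ∩ C : Set G).Finite :=
  (hC.inter_left Γ.isClosed_of_discrete).finite
    (isDiscrete_iff_discreteTopology.2 (.of_subset ‹_› inter_subset_left))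

lemma exists_conj_eq_conj_of_image_mk_eq_univ {G : Type*} [Group G] (Γ : Subgroup G)
    {K : Set G} (hK : ((↑) '' K : Set (G ⧸ Γ)) = univ) {D T : G} (h : IsConj D T) :
    ∃ γ ∈ Γ, ∃ k ∈ K, γ * T * γ⁻¹ = k⁻¹ * D * k := by
  obtain ⟨c, rfl⟩ := isConj_iff.1 h
  obtain ⟨k, hk, hkc⟩ := hK.symm ▸ mem_univ ((c⁻¹ : G) : G ⧸ Γ)
  refine ⟨k⁻¹ * c⁻¹, QuotientGroup.eq.1 hkc, k, hk, by group⟩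

lemma trace_eq_or_eq_neg_of_isConj_projMk {A B : SL2C} (h : IsConj (projMk A) (projMk B)) :
    trace (B : Matrix (Fin 2) (Fin 2) ℂ) = trace (A : Matrix (Fin 2) (Fin 2) ℂ) ∨
      trace (B : Matrix (Fin 2) (Fin 2) ℂ) = -trace (A : Matrix (Fin 2) (Fin 2) ℂ) := by
  obtain ⟨u, hu⟩ := isConj_iff.1 h
  obtain ⟨U, rfl⟩ := QuotientGroup.mk'_surjective _ u
  obtain ⟨z, hz, rfl⟩ := (QuotientGroup.mk'_eq_mk' _).1
    (show projMk (U * A * U⁻¹) = projMk B by simpa only [projMk, map_mul, map_inv] using hu)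
  obtain ⟨r, hr, hrz⟩ := Matrix.SpecialLinearGroup.mem_center_iff.1 hz
  have htr : trace ((U * A * U⁻¹ * z : SL2C) : Matrix (Fin 2) (Fin 2) ℂ) =
      r * trace (A : Matrix (Fin 2) (Fin 2) ℂ) := by
    rw [Matrix.SpecialLinearGroup.coe_mul, ← hrz, scalar_apply, ← smul_eq_mul_diagonal,
      trace_smul, smul_eq_mul, Matrix.SpecialLinearGroup.coe_mul,
      Matrix.SpecialLinearGroup.coe_mul, trace_mul_cycle, ← Matrix.SpecialLinearGroup.coe_mul,
      inv_mul_cancel, Matrix.SpecialLinearGroup.coe_one, one_mul]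
  rw [Fintype.card_fin, sq_eq_one_iff] at hr
  rw [htr]
  rcases hr with rfl | rfl <;> simp

lemma trace_dMat (a : ℂ) (h : a ≠ 0) :
    trace ((dMat a h : SL2C) : Matrix (Fin 2) (Fin 2) ℂ) = a + a⁻¹ := by
  simp [dMat, trace_fin_two]

lemma Complex.norm_eq_of_add_inv_eq {a b : ℂ} (ha : 1 < ‖a‖) (hb : 1 < ‖b‖)
    (h : a + a⁻¹ = b + b⁻¹) : ‖a‖ = ‖b‖ := by
  have ha0 : a ≠ 0 := norm_pos_iff.1 (one_pos.trans ha)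
  have hb0 : b ≠ 0 := norm_pos_iff.1 (one_pos.trans hb)
  have hfac : (a - b) * (a * b - 1) = 0 := by
    field_simp at h
    linear_combination h
  rcases mul_eq_zero.1 hfac with hab | hab
  · rw [sub_eq_zero.1 hab]
  · have : ‖a‖ * ‖b‖ = 1 := by rw [← norm_mul, sub_eq_zero.1 hab, norm_one]
    nlinarith

lemma IsLoxodromicWith.norm_eq {S : PSL2C} {a b : ℂ} (ha : IsLoxodromicWith S a)
    (hb : IsLoxodromicWith S b) : ‖a‖ = ‖b‖ := by
  obtain ⟨_, ha1, hSa⟩ := ha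
  obtain ⟨_, hb1, hSb⟩ := hb
  rcases trace_eq_or_eq_neg_of_isConj_projMk (hSa.trans hSb.symm) with htr | htr <;>
    rw [trace_dMat, trace_dMat] at htr
  · exact (Complex.norm_eq_of_add_inv_eq hb1 ha1 htr).symm
  · rw [← norm_neg a]
    refine (Complex.norm_eq_of_add_inv_eq hb1 (by rwa [norm_neg]) ?_).symm
    rw [htr, inv_neg, neg_add]

lemma finite_setOf_isLoxodromicWith_norm_sq {F : Set PSL2C} (hF : F.Finite) :
    {x : ℝ | ∃ S ∈ F, ∃ a, IsLoxodromicWith S a ∧ ‖a‖ ^ 2 = x}.Finite := by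
  refine (hF.biUnion fun S _ => Set.Subsingleton.finite (s := {x : ℝ | ∃ a,
    IsLoxodromicWith S a ∧ ‖a‖ ^ 2 = x}) ?_).subset ?_
  · rintro _ ⟨a, ha, rfl⟩ _ ⟨b, hb, rfl⟩
    rw [ha.norm_eq hb]
  · rintro x ⟨S, hS, a, ha, rfl⟩
    exact mem_biUnion hS ⟨a, ha, rfl⟩

lemma isCompact_range_projMk_dMat {s : Set ℂ} (hs : IsCompact s) (h0 : (0 : ℂ) ∉ s) :
    IsCompact (range fun a : s => projMk (dMat a (ne_of_mem_of_not_mem a.2 h0))) := by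
  have := isCompact_iff_compactSpace.1 hs
  have hs0 : Continuous fun a : s => (⟨a, ne_of_mem_of_not_mem a.2 h0⟩ : {a : ℂ // a ≠ 0}) :=
    continuous_subtype_val.subtype_mk _
  exact isCompact_range ((continuous_projMk.comp continuous_dMat).comp hs0)

lemma exists_isCompact_conj_mem_of_isLoxodromicWith (Γ : Subgroup PSL2C)
    [CompactSpace (PSL2C ⧸ Γ)] (r : ℝ) :
    ∃ C : Set PSL2C, IsCompact C ∧ ∀ T ∈ Γ, ∀ a : ℂ, IsLoxodromicWith T a → ‖a‖ ≤ r →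
      ∃ S ∈ (Γ ∩ C : Set PSL2C), IsLoxodromicWith S a := by
  obtain ⟨K, hK, hKΓ⟩ := (QuotientGroup.isOpenMap_coe (N := Γ)).exists_isCompact_image_eq_univ
    QuotientGroup.mk_surjective
  set A := Metric.closedBall (0 : ℂ) r \ Metric.ball 0 1
  have hA0 : (0 : ℂ) ∉ A := fun h => h.2 (Metric.mem_ball_self one_pos)
  refine ⟨(fun p : PSL2C × PSL2C => p.2⁻¹ * p.1 * p.2) ''
    (range (fun a : A => projMk (dMat a (ne_of_mem_of_not_mem a.2 hA0))) ×ˢ K),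
    ((isCompact_range_projMk_dMat ((isCompact_closedBall 0 r).diff Metric.isOpen_ball)
      hA0).prod hK).image (by fun_prop), fun T hT a ⟨ha0, ha1, hDT⟩ har => ?_⟩
  obtain ⟨γ, hγ, k, hk, hγT⟩ := exists_conj_eq_conj_of_image_mk_eq_univ Γ hKΓ hDT
  refine ⟨γ * T * γ⁻¹, ⟨Γ.mul_mem (Γ.mul_mem hγ hT) (Γ.inv_mem hγ), ?_⟩,
    ha0, ha1, hDT.trans (isConj_iff.2 ⟨γ, rfl⟩)⟩
  exact ⟨⟨_, k⟩, ⟨⟨⟨a, by simpa using har, by simpa using ha1.le⟩, rfl⟩, hk⟩, hγT.symm⟩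

/-- Let `Γ` be a cocompact Kleinian group.  Then there is a constant
`d₀ > 1` such that `N(T₀) > d₀` for every loxodromic element `T₀ ∈ Γ`. -/
theorem stmt_14 (Γ : Subgroup PSL2C)
    (hdisc : DiscreteTopology Γ) (hcpt : CompactSpace (PSL2C ⧸ Γ)) :
    ∃ d₀ : ℝ, 1 < d₀ ∧ ∀ T ∈ Γ, ∀ a : ℂ,
      IsLoxodromicWith T a → d₀ < ‖a‖ ^ 2 := by
  obtain ⟨C, hC, hΓC⟩ := exists_isCompact_conj_mem_of_isLoxodromicWith Γ 2
  set N := {x : ℝ | ∃ S ∈ (Γ ∩ C : Set PSL2C), ∃ a, IsLoxodromicWith S a ∧ ‖a‖ ^ 2 = x}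
  have hN : ∀ x ∈ insert 4 N, 1 < x := by
    rintro x (rfl | ⟨S, -, a, ⟨-, ha1, -⟩, rfl⟩)
    · norm_num
    · nlinarith
  obtain ⟨d₀, hd₀, hd₀N⟩ := Set.Finite.exists_between (finite_singleton 1) (singleton_nonempty 1)
    ((finite_setOf_isLoxodromicWith_norm_sq (Γ.finite_inter_of_isCompact hC)).insert 4)
    (insert_nonempty _ _) (by rintro _ rfl; exact hN)
  refine ⟨d₀, hd₀ 1 rfl, fun T hT a ha => ?_⟩
  rcases le_or_gt ‖a‖ 2 with hle | hgt
  · obtain ⟨S, hS, hSa⟩ := hΓC T hT a ha hle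
    exact hd₀N _ (mem_insert_of_mem _ ⟨S, hS, a, hSa, rfl⟩)
  · exact (hd₀N 4 (mem_insert _ _)).trans (by nlinarith)
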